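/- arXiv:1810.04082 — 14 statements merged into one kernel-verified Lean document; each statement's English description precedes it below -/
import Mathlib

section
/- Assume in addition that each H_i is finite-dimensional, and set H_f^⊥ := ⨆_{i∈I} (H_i ∩ (f(H_i))^⊥). Then V is the direct sum of Im f and H_f^⊥, i.e. Im f ∩ H_f^⊥ = {0} and Im f ⊔ H_f^⊥ = V. -/
/-- With `V = ⊕ᵢ Hᵢ`, each `Hᵢ` finite-dimensional and `f`-invariant,
and `H_f^⊥ := ⨆ i, Hᵢ ⊓ (f(Hᵢ))ᗮ`, one has `V = Im f ⊕ H_f^⊥`. -/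
theorem stmt3 (𝕜 : Type*) [RCLike 𝕜] (V : Type*) [NormedAddCommGroup V]
    [InnerProductSpace 𝕜 V] (f : V →ₗ[𝕜] V) (I : Type*) (H : I → Submodule 𝕜 V)
    (hinv : ∀ i, (H i).map f ≤ H i)
    (hHind : iSupIndep H) (hHsup : ⨆ i, H i = ⊤)
    (hfin : ∀ i, FiniteDimensional 𝕜 (H i)) :
    LinearMap.range f ⊓ (⨆ i, H i ⊓ ((H i).map f)ᗮ) = ⊥ ∧
      LinearMap.range f ⊔ (⨆ i, H i ⊓ ((H i).map f)ᗮ) = ⊤ := by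
  classical
  -- `range f = ⨆ i, map f (H i)`
  have hrange : LinearMap.range f = ⨆ i, (H i).map f := by
    rw [← Submodule.map_top, ← hHsup, Submodule.map_iSup]
  -- uniqueness of decompositions: a finitely supported family in the `H i` summing to 0 is 0
  have key : ∀ (c : I →₀ V), (∀ i, c i ∈ H i) → (c.sum fun _ v => v) = 0 → ∀ i, c i = 0 := by
    intro c hc hsum j
    by_cases hj : j ∈ c.support
    · have hsplit : c j + ∑ i ∈ c.support.erase j, c i = 0 := by
        rw [Finsupp.sum, ← Finset.add_sum_erase _ _ hj] at hsum
        exact hsum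
      have hmem : c j ∈ ⨆ (i) (_ : i ≠ j), H i := by
        rw [eq_neg_of_add_eq_zero_left hsplit]
        refine Submodule.neg_mem _ (Submodule.sum_mem _ fun i hi => ?_)
        have hij : i ≠ j := Finset.ne_of_mem_erase hi
        exact Submodule.mem_iSup_of_mem i (Submodule.mem_iSup_of_mem hij (hc i))
      exact (Submodule.disjoint_def.mp (hHind j)) _ (hc j) hmem
    · simpa using Finsupp.notMem_support_iff.mp hj
  constructor
  · -- inf = ⊥
    rw [eq_bot_iff]
    intro x hx
    obtain ⟨hx1, hx2⟩ := Submodule.mem_inf.mp hx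
    rw [hrange] at hx1
    obtain ⟨a, ha, hasum⟩ := (Submodule.mem_iSup_iff_exists_finsupp _ _).mp hx1
    obtain ⟨b, hb, hbsum⟩ := (Submodule.mem_iSup_iff_exists_finsupp _ _).mp hx2
    have hcsum : ((a - b).sum fun _ v => v) = 0 := by
      rw [Finsupp.sum_sub_index (fun _ _ _ => rfl), hasum, hbsum, sub_self]
    have hcmem : ∀ i, (a - b) i ∈ H i := by
      intro i
      have hai : a i ∈ H i := hinv i (ha i)
      have hbi : b i ∈ H i := (Submodule.mem_inf.mp (hb i)).1
      simpa using Submodule.sub_mem _ hai hbi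
    have hzero : ∀ i, a i = b i := by
      intro i
      have := key (a - b) hcmem hcsum i
      simpa [sub_eq_zero] using this
    have hai0 : ∀ i, a i = 0 := by
      intro i
      have h1 : a i ∈ (H i).map f := ha i
      have h2 : a i ∈ ((H i).map f)ᗮ := by
        rw [hzero i]; exact (Submodule.mem_inf.mp (hb i)).2
      exact inner_self_eq_zero.mp (h2 _ h1)
    rw [Submodule.mem_bot, ← hasum]
    rw [Finsupp.sum]
    exact Finset.sum_eq_zero fun i _ => hai0 i
  · -- sup = ⊤
    rw [eq_top_iff, ← hHsup]
    refine iSup_le fun i => ?_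
    haveI := hfin i
    haveI : FiniteDimensional 𝕜 ((H i).map f) :=
      Module.Finite.map (H i) f
    have hsup : (H i).map f ⊔ ((H i).map f)ᗮ = ⊤ :=
      Submodule.sup_orthogonal_of_hasOrthogonalProjection
    have hmod : ((H i).map f ⊔ ((H i).map f)ᗮ) ⊓ H i =
        (H i).map f ⊔ (((H i).map f)ᗮ ⊓ H i) :=
      sup_inf_assoc_of_le _ (hinv i)
    have : H i = (H i).map f ⊔ (H i ⊓ ((H i).map f)ᗮ) := by
      rw [inf_comm (H i)]
      rw [← hmod, hsup, top_inf_eq]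
    rw [this]
    refine sup_le ?_ ?_
    · exact le_sup_of_le_left (by rw [hrange]; exact le_iSup (fun i => (H i).map f) i)
    · exact le_sup_of_le_right (le_iSup (fun i => H i ⊓ ((H i).map f)ᗮ) i)
end

section
/- Assume in addition that each H_i is finite-dimensional, and set H̃_f^⊥ := ⨆_{i∈I} (H_i ∩ (Ker f ∩ H_i)^⊥). Then V is the direct sum of Ker f and H̃_f^⊥, i.e. Ker f ∩ H̃_f^⊥ = {0} and Ker f ⊔ H̃_f^⊥ = V. -/
/-- Auxiliary: for an independent family of submodules, a finite sum of members
equal to zero forces each member to be zero. -/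
lemma aux_indep_sum_eq_zero {R M : Type*} [Ring R] [AddCommGroup M] [Module R M]
    {I : Type*} (H : I → Submodule R M) (hHind : iSupIndep H)
    (s : Finset I) (v : I → M) (hv : ∀ i, v i ∈ H i)
    (hsum : ∑ i ∈ s, v i = 0) : ∀ j ∈ s, v j = 0 := by
  classical
  intro j hj
  have h1 : v j = -∑ i ∈ s.erase j, v i := by
    have := Finset.add_sum_erase s v hj
    rw [hsum] at this
    rw [eq_comm, neg_eq_iff_add_eq_zero, add_comm]
    simpa using this
  have h2 : (∑ i ∈ s.erase j, v i) ∈ ⨆ (i) (_ : i ≠ j), H i := by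
    refine Submodule.sum_mem _ fun i hi => ?_
    exact le_iSup₂ (f := fun i (_ : i ≠ j) => H i) i (Finset.ne_of_mem_erase hi) (hv i)
  have h3 : v j ∈ ⨆ (i) (_ : i ≠ j), H i := by
    rw [h1]; exact neg_mem h2
  have := (hHind j).le_bot (Submodule.mem_inf.mpr ⟨hv j, h3⟩)
  simpa using this

/-- With `V = ⊕ᵢ Hᵢ`, each `Hᵢ` finite-dimensional and `f`-invariant,
and `H̃_f^⊥ := ⨆ i, Hᵢ ⊓ (Ker f ∩ Hᵢ)ᗮ`, one has `V = Ker f ⊕ H̃_f^⊥`. -/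
theorem stmt4 (𝕜 : Type*) [RCLike 𝕜] (V : Type*) [NormedAddCommGroup V]
    [InnerProductSpace 𝕜 V] (f : V →ₗ[𝕜] V) (I : Type*) (H : I → Submodule 𝕜 V)
    (hinv : ∀ i, (H i).map f ≤ H i)
    (hHind : iSupIndep H) (hHsup : ⨆ i, H i = ⊤)
    (hfin : ∀ i, FiniteDimensional 𝕜 (H i)) :
    LinearMap.ker f ⊓ (⨆ i, H i ⊓ (LinearMap.ker f ⊓ H i)ᗮ) = ⊥ ∧
      LinearMap.ker f ⊔ (⨆ i, H i ⊓ (LinearMap.ker f ⊓ H i)ᗮ) = ⊤ := by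
  classical
  constructor
  · rw [eq_bot_iff]
    rintro x hx
    obtain ⟨hxk, hxs⟩ := Submodule.mem_inf.mp hx
    rw [Submodule.mem_iSup_iff_exists_finsupp] at hxs
    obtain ⟨c, hc, hsum⟩ := hxs
    have hcH : ∀ i, c i ∈ H i := fun i => (Submodule.mem_inf.mp (hc i)).1
    have hcO : ∀ i, c i ∈ (LinearMap.ker f ⊓ H i)ᗮ := fun i => (Submodule.mem_inf.mp (hc i)).2
    have hfc : ∀ i, f (c i) ∈ H i := fun i => hinv i ⟨c i, hcH i, rfl⟩
    have hfx : f x = 0 := LinearMap.mem_ker.mp hxk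
    have hsum0 : ∑ i ∈ c.support, f (c i) = 0 := by
      rw [← map_sum]
      have : ∑ i ∈ c.support, c i = x := hsum
      rw [this, hfx]
    have hzero : ∀ j, c j = 0 := by
      intro j
      by_cases hj : j ∈ c.support
      · have hfcz : f (c j) = 0 :=
          aux_indep_sum_eq_zero H hHind c.support (fun i => f (c i)) hfc hsum0 j hj
        have hker : c j ∈ LinearMap.ker f ⊓ H j :=
          Submodule.mem_inf.mpr ⟨LinearMap.mem_ker.mpr hfcz, hcH j⟩
        have := hcO j (c j) hker
        simpa using inner_self_eq_zero.mp this
      · exact Finsupp.notMem_support_iff.mp hj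
    have : (0 : V) = x := by
      rw [← hsum]
      exact (Finset.sum_eq_zero fun i _ => hzero i).symm
    rw [← this]
    exact Submodule.mem_bot 𝕜 |>.mpr rfl
  · rw [eq_top_iff, ← hHsup]
    refine iSup_le fun i => ?_
    intro x hx
    haveI := hfin i
    haveI : FiniteDimensional 𝕜 (LinearMap.ker f ⊓ H i : Submodule 𝕜 V) :=
      Submodule.finiteDimensional_of_le inf_le_right
    set K : Submodule 𝕜 V := LinearMap.ker f ⊓ H i with hK
    set y : V := (K.orthogonalProjectionOnto x : V) with hy
    have hyK : y ∈ K := (K.orthogonalProjectionOnto x).2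
    have hxy : x - y ∈ Kᗮ := Submodule.sub_starProjection_mem_orthogonal (K := K) x
    have hxyH : x - y ∈ H i := Submodule.sub_mem _ hx (inf_le_right (α := Submodule 𝕜 V) hyK)
    refine Submodule.mem_sup.mpr ⟨y, inf_le_left (α := Submodule 𝕜 V) hyK,
      x - y, ?_, by abel⟩
    exact Submodule.mem_iSup_of_mem i (Submodule.mem_inf.mpr ⟨hxyH, hxy⟩)
end

section
/- Assume in addition that each H_i is finite-dimensional, and set H̃_f^⊥ := ⨆_{i∈I} (H_i ∩ (Ker f ∩ H_i)^⊥). Then f restricts to a linear isomorphism from H̃_f^⊥ onto Im f; that is, f is injective on H̃_f^⊥ and f(H̃_f^⊥) = Im f. -/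
/-- With `V = ⊕ᵢ Hᵢ`, each `Hᵢ` finite-dimensional and `f`-invariant,
and `H̃_f^⊥ := ⨆ i, Hᵢ ⊓ (Ker f ∩ Hᵢ)ᗮ`, `f` restricts to a linear isomorphism
from `H̃_f^⊥` onto `Im f`: `f` is injective on `H̃_f^⊥` and `f(H̃_f^⊥) = Im f`. -/
theorem stmt5 (𝕜 : Type*) [RCLike 𝕜] (V : Type*) [NormedAddCommGroup V]
    [InnerProductSpace 𝕜 V] (f : V →ₗ[𝕜] V) (I : Type*) (H : I → Submodule 𝕜 V)
    (hinv : ∀ i, (H i).map f ≤ H i)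
    (hHind : iSupIndep H) (hHsup : ⨆ i, H i = ⊤)
    (hfin : ∀ i, FiniteDimensional 𝕜 (H i)) :
    (∀ x ∈ (⨆ i, H i ⊓ (LinearMap.ker f ⊓ H i)ᗮ),
      ∀ y ∈ (⨆ i, H i ⊓ (LinearMap.ker f ⊓ H i)ᗮ), f x = f y → x = y) ∧
      (⨆ i, H i ⊓ (LinearMap.ker f ⊓ H i)ᗮ).map f = LinearMap.range f := by
  classical
  set K : I → Submodule 𝕜 V := fun i => H i ⊓ (LinearMap.ker f ⊓ H i)ᗮ with hKdef
  -- each K i maps into H i under f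
  have hg : ∀ i, ∀ x ∈ K i, f x ∈ H i := fun i x hx =>
    hinv i ⟨x, hx.1, rfl⟩
  let g : ∀ i, K i →ₗ[𝕜] H i := fun i => f.restrict (hg i)
  -- f is injective on ⨆ K
  have hker : ∀ x ∈ ⨆ i, K i, f x = 0 → x = 0 := by
    intro x hx hfx
    rw [Submodule.mem_iSup_iff_exists_dfinsupp] at hx
    obtain ⟨v, rfl⟩ := hx
    have hcomp : (DFinsupp.lsum ℕ (fun i => (H i).subtype)).comp
        (DFinsupp.mapRange.linearMap g) =
        f.comp (DFinsupp.lsum ℕ fun i => (K i).subtype) := by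
      ext i x
      simp [g]
    have h0 : (DFinsupp.lsum ℕ (fun i => (H i).subtype))
        (DFinsupp.mapRange.linearMap g v) = 0 := by
      rw [← LinearMap.comp_apply, hcomp, LinearMap.comp_apply, hfx]
    have hinj := hHind.dfinsupp_lsum_injective (R := 𝕜)
    have hv0 : DFinsupp.mapRange.linearMap g v = 0 := by
      apply hinj
      rw [h0, map_zero]
    -- each component of v is 0
    have hvz : v = 0 := by
      ext i
      have hgi : g i (v i) = 0 := by
        have := DFunLike.congr_fun hv0 i
        simpa using this
      have hfvi : f (v i : V) = 0 := by
        have := congrArg (Subtype.val) hgi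
        simpa [g, LinearMap.restrict_apply] using this
      have h1 : (v i : V) ∈ LinearMap.ker f ⊓ H i := ⟨hfvi, (v i).2.1⟩
      have h2 : (v i : V) ∈ (LinearMap.ker f ⊓ H i)ᗮ := (v i).2.2
      have : (v i : V) = 0 := by
        have := Submodule.inner_right_of_mem_orthogonal h1 h2
        simpa [inner_self_eq_zero] using this
      simpa using this
    rw [hvz, map_zero]
  constructor
  · intro x hx y hy hxy
    have hsub : x - y ∈ ⨆ i, K i := Submodule.sub_mem _ hx hy
    have := hker _ hsub (by rw [map_sub, hxy, sub_self])
    exact sub_eq_zero.mp this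
  · apply le_antisymm
    · exact LinearMap.map_le_range
    · rw [LinearMap.range_eq_map, ← hHsup, Submodule.map_iSup]
      apply iSup_le
      intro i
      haveI := hfin i
      haveI : FiniteDimensional 𝕜 (LinearMap.ker f ⊓ H i : Submodule 𝕜 V) :=
        Submodule.finiteDimensional_of_le inf_le_right
      have hdecomp : (LinearMap.ker f ⊓ H i) ⊔ K i = H i := by
        have := Submodule.sup_orthogonal_inf_of_hasOrthogonalProjection
          (inf_le_right : LinearMap.ker f ⊓ H i ≤ H i)
        show LinearMap.ker f ⊓ H i ⊔ (H i ⊓ (LinearMap.ker f ⊓ H i)ᗮ) = H i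
        rw [inf_comm (H i)]
        exact this
      rw [← hdecomp, Submodule.map_sup]
      apply sup_le
      · intro y hy
        obtain ⟨x, hx, rfl⟩ := hy
        have : f x = 0 := hx.1
        rw [this]
        exact Submodule.zero_mem _
      · exact Submodule.map_mono (le_iSup K i)
end

section
/- Assume in addition that each H_i is finite-dimensional. Then ⨆_{i∈I} (H_i ∩ (f(H_i))^⊥) = (Im f)^⊥ if and only if for every i ∈ I one has H_i ∩ (f(H_i))^⊥ ⊆ (⨆_{j≠i} f(H_j))^⊥. -/
/-- With `V = ⊕ᵢ Hᵢ`, each `Hᵢ` finite-dimensional and `f`-invariant,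
`⨆ i, Hᵢ ⊓ (f(Hᵢ))ᗮ = (Im f)ᗮ` iff for every `i`,
`Hᵢ ⊓ (f(Hᵢ))ᗮ ≤ (⨆ j ≠ i, f(Hⱼ))ᗮ`. -/
theorem stmt6 (𝕜 : Type*) [RCLike 𝕜] (V : Type*) [NormedAddCommGroup V]
    [InnerProductSpace 𝕜 V] (f : V →ₗ[𝕜] V) (I : Type*) (H : I → Submodule 𝕜 V)
    (hinv : ∀ i, (H i).map f ≤ H i)
    (hHind : iSupIndep H) (hHsup : ⨆ i, H i = ⊤)
    (hfin : ∀ i, FiniteDimensional 𝕜 (H i)) :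
    (⨆ i, H i ⊓ ((H i).map f)ᗮ) = (LinearMap.range f)ᗮ ↔
      ∀ i, H i ⊓ ((H i).map f)ᗮ ≤ (⨆ j ∈ {j | j ≠ i}, (H j).map f)ᗮ := by
  set U : I → Submodule 𝕜 V := fun i => (H i).map f with hU
  set K : I → Submodule 𝕜 V := fun i => H i ⊓ (U i)ᗮ with hK
  have hrange : LinearMap.range f = ⨆ i, U i := by
    rw [← Submodule.map_top, ← hHsup, Submodule.map_iSup]
  have hsplit : ∀ i, U i ⊔ (⨆ j ∈ {j | j ≠ i}, U j) = ⨆ j, U j := by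
    intro i
    apply le_antisymm
    · exact sup_le (le_iSup U i) (iSup₂_le fun j _ => le_iSup U j)
    · refine iSup_le fun j => ?_
      rcases eq_or_ne j i with rfl | hj
      · exact le_sup_left
      · exact le_sup_of_le_right (le_iSup₂ (f := fun j _ => U j) j hj)
  have hKle : (∀ i, K i ≤ (⨆ j ∈ {j | j ≠ i}, U j)ᗮ) →
      (⨆ i, K i) ≤ (LinearMap.range f)ᗮ := by
    intro h
    refine iSup_le fun i => ?_
    rw [hrange, ← hsplit i, ← Submodule.inf_orthogonal]
    exact le_inf inf_le_right (h i)
  constructor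
  · intro heq i
    calc K i ≤ ⨆ i, K i := le_iSup K i
      _ = (LinearMap.range f)ᗮ := heq
      _ ≤ (⨆ j ∈ {j | j ≠ i}, U j)ᗮ := by
          apply Submodule.orthogonal_le
          rw [hrange]
          exact iSup₂_le fun j _ => le_iSup U j
  · intro h
    refine le_antisymm (hKle h) ?_
    -- decomposition: range f ⊔ ⨆ K i = ⊤
    have hfinU : ∀ i, FiniteDimensional 𝕜 (U i) := fun i => Module.Finite.map (H i) f
    have htop : LinearMap.range f ⊔ (⨆ i, K i) = ⊤ := by
      rw [← top_le_iff, ← hHsup]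
      refine iSup_le fun i => ?_
      have := hfinU i
      have hdecomp : U i ⊔ ((U i)ᗮ ⊓ H i) = H i :=
        Submodule.sup_orthogonal_inf_of_hasOrthogonalProjection (hinv i)
      calc H i = U i ⊔ ((U i)ᗮ ⊓ H i) := hdecomp.symm
        _ ≤ LinearMap.range f ⊔ (⨆ i, K i) := by
            refine sup_le_sup ?_ ?_
            · exact LinearMap.map_le_range
            · rw [inf_comm]; exact le_iSup K i
    intro x hx
    have hxtop : x ∈ LinearMap.range f ⊔ (⨆ i, K i) := htop ▸ Submodule.mem_top
    rcases Submodule.mem_sup.mp hxtop with ⟨u, hu, w, hw, rfl⟩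
    have hwperp : w ∈ (LinearMap.range f)ᗮ := hKle h hw
    have huperp : u ∈ (LinearMap.range f)ᗮ := by
      have := Submodule.sub_mem _ hx hwperp
      simpa using this
    have hu0 : u = 0 := inner_self_eq_zero.mp (huperp u hu)
    rw [hu0, zero_add]
    exact hw
end

section
/- Assume in addition that each H_i is finite-dimensional. Then ⨆_{i∈I} (H_i ∩ (Ker f ∩ H_i)^⊥) = (Ker f)^⊥ if and only if for every i ∈ I one has H_i ∩ (Ker f ∩ H_i)^⊥ ⊆ (⨆_{j≠i} (Ker f ∩ H_j))^⊥. -/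
/-- With `V = ⊕ᵢ Hᵢ`, each `Hᵢ` finite-dimensional and `f`-invariant,
`⨆ i, Hᵢ ⊓ (Ker f ∩ Hᵢ)ᗮ = (Ker f)ᗮ` iff for every `i`,
`Hᵢ ⊓ (Ker f ∩ Hᵢ)ᗮ ⊆ (⨆ j ≠ i, Ker f ∩ Hⱼ)ᗮ`. -/
theorem stmt7 (𝕜 : Type*) [RCLike 𝕜] (V : Type*) [NormedAddCommGroup V]
    [InnerProductSpace 𝕜 V] (f : V →ₗ[𝕜] V) (I : Type*) (H : I → Submodule 𝕜 V)
    (hinv : ∀ i, (H i).map f ≤ H i)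
    (hHind : iSupIndep H) (hHsup : ⨆ i, H i = ⊤)
    (hfin : ∀ i, FiniteDimensional 𝕜 (H i)) :
    (⨆ i, H i ⊓ (LinearMap.ker f ⊓ H i)ᗮ) = (LinearMap.ker f)ᗮ ↔
      ∀ i, H i ⊓ (LinearMap.ker f ⊓ H i)ᗮ ≤
        (⨆ j ∈ {j | j ≠ i}, LinearMap.ker f ⊓ H j)ᗮ := by
  classical
  set K := LinearMap.ker f with hKdef
  set Ki : I → Submodule 𝕜 V := fun i => K ⊓ H i with hKidef
  set W : I → Submodule 𝕜 V := fun i => H i ⊓ (Ki i)ᗮ with hWdef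
  -- Step 1: K = ⨆ i, Ki i
  have hK : K = ⨆ i, Ki i := by
    apply le_antisymm
    · intro x hx
      have hx' : x ∈ ⨆ i, H i := hHsup ▸ Submodule.mem_top
      rw [Submodule.mem_iSup_iff_exists_finsupp] at hx' ⊢
      obtain ⟨g, hg, hgsum⟩ := hx'
      refine ⟨g, fun i => ?_, hgsum⟩
      refine Submodule.mem_inf.mpr ⟨LinearMap.mem_ker.mpr ?_, hg i⟩
      by_cases hi : i ∈ g.support
      · have hfx : (∑ j ∈ g.support, f (g j)) = 0 := by
          have h0 : f x = 0 := LinearMap.mem_ker.mp hx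
          calc ∑ j ∈ g.support, f (g j) = f (g.sum fun _ v => v) := by
                rw [Finsupp.sum, map_sum]
            _ = 0 := by rw [hgsum]; exact h0
        have h1 : f (g i) = -∑ j ∈ g.support.erase i, f (g j) := by
          have h2 := Finset.add_sum_erase _ (fun j => f (g j)) hi
          rw [hfx] at h2
          exact eq_neg_of_add_eq_zero_left h2
        have hmem1 : f (g i) ∈ H i := hinv i ⟨g i, hg i, rfl⟩
        have hmem2 : f (g i) ∈ ⨆ j, ⨆ _ : j ≠ i, H j := by
          rw [h1]
          refine Submodule.neg_mem _ (Submodule.sum_mem _ fun j hj => ?_)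
          exact Submodule.mem_iSup_of_mem j
            (Submodule.mem_iSup_of_mem (Finset.ne_of_mem_erase hj) (hinv j ⟨g j, hg j, rfl⟩))
        have := (hHind i).le_bot (Submodule.mem_inf.mpr ⟨hmem1, hmem2⟩)
        exact (Submodule.mem_bot 𝕜).mp this
      · rw [Finsupp.notMem_support_iff.mp hi, map_zero]
    · exact iSup_le fun i => inf_le_left
  -- Step 2: Ki i ⊔ W i = H i
  have hsplit : ∀ i, Ki i ⊔ W i = H i := by
    intro i
    haveI := hfin i
    haveI : FiniteDimensional 𝕜 (Ki i) :=
      Submodule.finiteDimensional_of_le (inf_le_right : Ki i ≤ H i)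
    have h2 : Ki i ⊔ (Ki i)ᗮ = ⊤ := Submodule.sup_orthogonal_of_hasOrthogonalProjection
    have hW : W i = (Ki i)ᗮ ⊓ H i := inf_comm _ _
    rw [hW, ← sup_inf_assoc_of_le _ (inf_le_right : Ki i ≤ H i), h2, top_inf_eq]
  constructor
  · intro h i
    refine le_trans (le_trans (le_iSup W i) h.le) (Submodule.orthogonal_le ?_)
    exact iSup_le fun j => iSup_le fun _ => inf_le_left
  · intro h
    have hWle : (⨆ i, W i) ≤ Kᗮ := by
      refine iSup_le fun i => ?_
      have h1 : W i ≤ (Ki i)ᗮ := inf_le_right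
      have h2 : W i ≤ (⨆ j ∈ {j | j ≠ i}, Ki j)ᗮ := h i
      have h3 : W i ≤ (Ki i ⊔ ⨆ j ∈ {j | j ≠ i}, Ki j)ᗮ := by
        rw [← Submodule.inf_orthogonal]
        exact le_inf h1 h2
      have h4 : K = Ki i ⊔ ⨆ j ∈ {j | j ≠ i}, Ki j := by
        rw [hK]
        apply le_antisymm
        · refine iSup_le fun j => ?_
          by_cases hj : j = i
          · subst hj; exact le_sup_left
          · exact le_trans (le_biSup Ki hj) le_sup_right
        · exact sup_le (le_iSup _ i) (iSup_le fun j => iSup_le fun _ => le_iSup _ j)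
      rw [h4]
      exact h3
    refine le_antisymm hWle ?_
    intro x hx
    have htop : K ⊔ ⨆ i, W i = ⊤ := by
      rw [hK, ← iSup_sup_eq, ← hHsup]
      exact iSup_congr hsplit
    have hxtop : x ∈ K ⊔ ⨆ i, W i := htop ▸ Submodule.mem_top
    obtain ⟨k, hk, w, hw, rfl⟩ := Submodule.mem_sup.mp hxtop
    have hk0 : k = 0 := by
      have hwperp : w ∈ Kᗮ := hWle hw
      have hkperp : k ∈ Kᗮ := by
        have := Submodule.sub_mem _ hx hwperp
        simpa using this
      exact (Submodule.mem_bot 𝕜).mp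
        ((Submodule.orthogonal_disjoint K).le_bot (Submodule.mem_inf.mpr ⟨hk, hkperp⟩))
    rw [hk0, zero_add]
    exact hw
end

section
/- If f : V → W is a linear map admissible for the Moore-Penrose inverse, then there exists a linear map g : W → V which is a Moore-Penrose inverse of f, i.e. f ∘ g ∘ f = f, g ∘ f ∘ g = g, ⟪g(f(v)), v'⟫_V = ⟪v, g(f(v'))⟫_V for all v, v' ∈ V, and ⟪f(g(w)), w'⟫_W = ⟪w, f(g(w'))⟫_W for all w, w' ∈ W. -/
/-- If `f : V → W` is admissible for the Moore-Penrose inverse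
(`Ker f ⊔ (Ker f)ᗮ = V` and `Im f ⊔ (Im f)ᗮ = W`), then there exists a linear
map `g : W → V` which is a Moore-Penrose inverse of `f`. -/
theorem stmt8 (𝕜 : Type*) [RCLike 𝕜] (V W : Type*) [NormedAddCommGroup V]
    [InnerProductSpace 𝕜 V] [NormedAddCommGroup W] [InnerProductSpace 𝕜 W]
    (f : V →ₗ[𝕜] W)
    (hker : LinearMap.ker f ⊔ (LinearMap.ker f)ᗮ = ⊤)
    (him : LinearMap.range f ⊔ (LinearMap.range f)ᗮ = ⊤) :
    ∃ g : W →ₗ[𝕜] V,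
      (∀ v, f (g (f v)) = f v) ∧
      (∀ w, g (f (g w)) = g w) ∧
      (∀ v v' : V, (inner 𝕜 (g (f v)) v' : 𝕜) = inner 𝕜 v (g (f v'))) ∧
      (∀ w w' : W, (inner 𝕜 (f (g w)) w' : 𝕜) = inner 𝕜 w (f (g w'))) := by
  set K := LinearMap.ker f
  set R := LinearMap.range f
  have hcK : IsCompl K Kᗮ := ⟨K.orthogonal_disjoint, codisjoint_iff.mpr hker⟩
  have hcR : IsCompl R Rᗮ := ⟨R.orthogonal_disjoint, codisjoint_iff.mpr him⟩
  set P : V →ₗ[𝕜] Kᗮ := Submodule.projectionOnto Kᗮ K hcK.symm with hPdef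
  set Q : W →ₗ[𝕜] R := Submodule.projectionOnto R Rᗮ hcR with hQdef
  have hPK : ∀ v : V, v - (P v : V) ∈ K := by
    intro v
    have h2 := Submodule.projection_add_projection_eq_self hcK v
    have h3 : ((K.projectionOnto Kᗮ hcK v : V)) = v - (P v : V) :=
      eq_sub_of_add_eq h2
    rw [← h3]; exact Submodule.coe_mem _
  have hQR : ∀ w : W, w - (Q w : W) ∈ Rᗮ := by
    intro w
    have h2 := Submodule.projection_add_projection_eq_self hcR.symm w
    have h3 : ((Rᗮ.projectionOnto R hcR.symm w : W)) = w - (Q w : W) :=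
      eq_sub_of_add_eq h2
    rw [← h3]; exact Submodule.coe_mem _
  have hfP : ∀ v : V, f (P v : V) = f v := by
    intro v
    have h : f (v - (P v : V)) = 0 := LinearMap.mem_ker.mp (hPK v)
    rw [map_sub, sub_eq_zero] at h
    exact h.symm
  set f' : Kᗮ →ₗ[𝕜] R :=
    (f.domRestrict Kᗮ).codRestrict R (fun x => LinearMap.mem_range_self f x.1) with hf'def
  have hf'app : ∀ x : Kᗮ, (f' x : W) = f x.1 := fun x => rfl
  have hinj : Function.Injective f' := by
    intro x y hxy
    have hmem : x.1 - y.1 ∈ K := by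
      apply LinearMap.mem_ker.mpr
      rw [map_sub, sub_eq_zero]
      have := congrArg Subtype.val hxy
      rw [hf'app, hf'app] at this
      exact this
    have hmem' : x.1 - y.1 ∈ Kᗮ := Kᗮ.sub_mem x.2 y.2
    have hz : x.1 - y.1 = 0 := by
      have := hcK.disjoint.le_bot ⟨hmem, hmem'⟩
      simpa using this
    exact Subtype.ext (sub_eq_zero.mp hz)
  have hsurj : Function.Surjective f' := by
    rintro ⟨w, v, hv⟩
    refine ⟨P v, ?_⟩
    apply Subtype.ext
    rw [hf'app, hfP v, hv]
  set e : Kᗮ ≃ₗ[𝕜] R := LinearEquiv.ofBijective f' ⟨hinj, hsurj⟩ with hedef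
  have heapp : ∀ x : Kᗮ, e x = f' x := fun x => rfl
  set g : W →ₗ[𝕜] V := Kᗮ.subtype ∘ₗ (e.symm : R →ₗ[𝕜] Kᗮ) ∘ₗ Q with hgdef
  have hgapp : ∀ w : W, g w = (e.symm (Q w) : V) := fun w => rfl
  have hgmem : ∀ w : W, g w ∈ Kᗮ := fun w => by rw [hgapp]; exact Submodule.coe_mem _
  have hfg : ∀ w : W, f (g w) = (Q w : W) := by
    intro w
    rw [hgapp]
    have h1 : f ((e.symm (Q w) : Kᗮ) : V) = (f' (e.symm (Q w)) : W) := rfl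
    rw [h1, ← heapp]
    congr 1
    exact e.apply_symm_apply (Q w)
  have hgf : ∀ v : V, g (f v) = (P v : V) := by
    intro v
    rw [hgapp]
    have hQfv : Q (f v) = f' (P v) := by
      have hmem : f v ∈ R := LinearMap.mem_range_self f v
      have h1 : Q (f v) = (⟨f v, hmem⟩ : R) := by
        have h2 := Submodule.projectionOnto_apply_left hcR (⟨f v, hmem⟩ : R)
        simpa using h2
      rw [h1]
      apply Subtype.ext
      rw [hf'app, hfP v]
    rw [hQfv, ← heapp]
    congr 1
    exact e.symm_apply_apply (P v)
  have hPsym : ∀ v v' : V, (inner 𝕜 ((P v : V)) v' : 𝕜) = inner 𝕜 v ((P v' : V)) := by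
    intro v v'
    have h1 : (inner 𝕜 ((P v : V)) (v' - (P v' : V)) : 𝕜) = 0 := by
      have h := (Submodule.mem_orthogonal K (P v : V)).mp (P v).2 _ (hPK v')
      rwa [inner_eq_zero_symm] at h
    have h2 : (inner 𝕜 (v - (P v : V)) ((P v' : V)) : 𝕜) = 0 :=
      (Submodule.mem_orthogonal K (P v' : V)).mp (P v').2 _ (hPK v)
    rw [inner_sub_right] at h1
    rw [inner_sub_left] at h2
    rw [sub_eq_zero] at h1 h2
    rw [h1, ← h2]
  have hQsym : ∀ w w' : W, (inner 𝕜 ((Q w : W)) w' : 𝕜) = inner 𝕜 w ((Q w' : W)) := by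
    intro w w'
    have h1 : (inner 𝕜 ((Q w : W)) (w' - (Q w' : W)) : 𝕜) = 0 :=
      (Submodule.mem_orthogonal R _).mp (hQR w') _ (Q w).2
    have h2 : (inner 𝕜 (w - (Q w : W)) ((Q w' : W)) : 𝕜) = 0 := by
      have h := (Submodule.mem_orthogonal R _).mp (hQR w) _ (Q w').2
      rwa [inner_eq_zero_symm] at h
    rw [inner_sub_right] at h1
    rw [inner_sub_left] at h2
    rw [sub_eq_zero] at h1 h2
    rw [h1, ← h2]
  refine ⟨g, ?_, ?_, ?_, ?_⟩
  · intro v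
    rw [hgf v, hfP v]
  · intro w
    rw [hgf (g w)]
    have h1 : P (g w) = ⟨g w, hgmem w⟩ := by
      have h2 := Submodule.projectionOnto_apply_left hcK.symm (⟨g w, hgmem w⟩ : Kᗮ)
      simpa using h2
    rw [h1]
  · intro v v'
    rw [hgf v, hgf v']
    exact hPsym v v'
  · intro w w'
    rw [hfg w, hfg w']
    exact hQsym w w'
end

section
/- Let f : V → W be a linear map. If there exists a linear map g : W → V which is a Moore-Penrose inverse of f, then f is admissible for the Moore-Penrose inverse, i.e. Ker f ⊔ (Ker f)^⊥ = V and Im f ⊔ (Im f)^⊥ = W. -/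
/-- If a linear map `f : V → W` has a Moore-Penrose inverse,
then `f` is admissible for the Moore-Penrose inverse:
`Ker f ⊔ (Ker f)ᗮ = V` and `Im f ⊔ (Im f)ᗮ = W`. -/
theorem stmt10 (𝕜 : Type*) [RCLike 𝕜] (V W : Type*) [NormedAddCommGroup V]
    [InnerProductSpace 𝕜 V] [NormedAddCommGroup W] [InnerProductSpace 𝕜 W]
    (f : V →ₗ[𝕜] W)
    (hg : ∃ g : W →ₗ[𝕜] V,
      (∀ v, f (g (f v)) = f v) ∧
      (∀ w, g (f (g w)) = g w) ∧
      (∀ v v' : V, (inner 𝕜 (g (f v)) v' : 𝕜) = inner 𝕜 v (g (f v'))) ∧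
      (∀ w w' : W, (inner 𝕜 (f (g w)) w' : 𝕜) = inner 𝕜 w (f (g w')))) :
    LinearMap.ker f ⊔ (LinearMap.ker f)ᗮ = ⊤ ∧
      LinearMap.range f ⊔ (LinearMap.range f)ᗮ = ⊤ := by
  obtain ⟨g, h1, h2, h3, h4⟩ := hg
  constructor
  · rw [eq_top_iff]
    intro v _
    have hv : v = (v - g (f v)) + g (f v) := by abel
    rw [hv]
    apply Submodule.add_mem_sup
    · simp [LinearMap.mem_ker, map_sub, h1]
    · rw [Submodule.mem_orthogonal]
      intro u hu
      rw [LinearMap.mem_ker] at hu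
      rw [inner_eq_zero_symm]
      have := h3 v u
      rw [hu] at this
      simpa using this
  · rw [eq_top_iff]
    intro w _
    have hw : w = f (g w) + (w - f (g w)) := by abel
    rw [hw]
    apply Submodule.add_mem_sup
    · exact ⟨g w, rfl⟩
    · rw [Submodule.mem_orthogonal]
      rintro _ ⟨v, rfl⟩
      have := h4 (f v) w
      rw [h1] at this
      rw [inner_sub_right, this]
      ring
end

section
/- Let f : V → W be a linear map and g : W → V a Moore-Penrose inverse of f. Then Im g = (Ker f)^⊥, Ker g = (Im f)^⊥, (Im g)^⊥ = Ker f and (Ker g)^⊥ = Im f; in particular g is admissible for the Moore-Penrose inverse and f is the Moore-Penrose inverse of g (so (f†)† = f). -/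
open Submodule in
private lemma aux_proj (𝕜 : Type*) [RCLike 𝕜] (V : Type*) [NormedAddCommGroup V]
    [InnerProductSpace 𝕜 V] (P : V →ₗ[𝕜] V)
    (hid : ∀ v, P (P v) = P v)
    (hsym : ∀ v v' : V, (inner 𝕜 (P v) v' : 𝕜) = inner 𝕜 v (P v')) :
    LinearMap.range P = (LinearMap.ker P)ᗮ ∧
    (LinearMap.range P)ᗮ = LinearMap.ker P ∧
    LinearMap.ker P ⊔ LinearMap.range P = ⊤ := by
  have hr : LinearMap.range P = (LinearMap.ker P)ᗮ := by
    apply le_antisymm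
    · rintro _ ⟨x, rfl⟩
      rw [Submodule.mem_orthogonal]
      intro u hu
      have : (inner 𝕜 (P u) x : 𝕜) = inner 𝕜 u (P x) := hsym u x
      rw [LinearMap.mem_ker.mp hu] at this
      simpa using this.symm
    · intro x hx
      have hk : x - P x ∈ LinearMap.ker P := by
        simp [LinearMap.mem_ker, hid]
      have h1 : (inner 𝕜 (x - P x) x : 𝕜) = 0 :=
        (Submodule.mem_orthogonal _ _).mp hx _ hk
      have h2 : (inner 𝕜 (x - P x) (P x) : 𝕜) = 0 := by
        rw [← hsym]
        simp [inner_sub_left, hid]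
      have h3 : (inner 𝕜 (x - P x) (x - P x) : 𝕜) = 0 := by
        rw [inner_sub_right, h1, h2, sub_zero]
      have h4 : x - P x = 0 := by
        simpa using inner_self_eq_zero.mp h3
      exact ⟨x, (sub_eq_zero.mp h4).symm⟩
  have hk : (LinearMap.range P)ᗮ = LinearMap.ker P := by
    apply le_antisymm
    · intro x hx
      have h1 : (inner 𝕜 (P x) x : 𝕜) = 0 :=
        (Submodule.mem_orthogonal _ _).mp hx _ ⟨x, rfl⟩
      have h2 : (inner 𝕜 (P x) (P x) : 𝕜) = 0 := by
        rw [hsym, hid, ← hsym]; exact h1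
      exact LinearMap.mem_ker.mpr (inner_self_eq_zero.mp h2)
    · intro x hx
      rw [Submodule.mem_orthogonal]
      rintro _ ⟨y, rfl⟩
      rw [hsym, LinearMap.mem_ker.mp hx, inner_zero_right]
  refine ⟨hr, hk, ?_⟩
  rw [eq_top_iff]
  intro x _
  have : x = (x - P x) + P x := by abel
  rw [this]
  exact Submodule.add_mem_sup (by simp [LinearMap.mem_ker, hid]) ⟨x, rfl⟩

/-- If `g : W → V` is a Moore-Penrose inverse of `f : V → W`, then
`Im g = (Ker f)ᗮ`, `Ker g = (Im f)ᗮ`, `(Im g)ᗮ = Ker f`, `(Ker g)ᗮ = Im f`;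
in particular `g` is admissible for the Moore-Penrose inverse and `f` is the
Moore-Penrose inverse of `g`. -/
theorem stmt11 (𝕜 : Type*) [RCLike 𝕜] (V W : Type*) [NormedAddCommGroup V]
    [InnerProductSpace 𝕜 V] [NormedAddCommGroup W] [InnerProductSpace 𝕜 W]
    (f : V →ₗ[𝕜] W) (g : W →ₗ[𝕜] V)
    (h₁ : ∀ v, f (g (f v)) = f v) (h₂ : ∀ w, g (f (g w)) = g w)
    (h₃ : ∀ v v' : V, (inner 𝕜 (g (f v)) v' : 𝕜) = inner 𝕜 v (g (f v')))
    (h₄ : ∀ w w' : W, (inner 𝕜 (f (g w)) w' : 𝕜) = inner 𝕜 w (f (g w'))) :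
    LinearMap.range g = (LinearMap.ker f)ᗮ ∧
    LinearMap.ker g = (LinearMap.range f)ᗮ ∧
    (LinearMap.range g)ᗮ = LinearMap.ker f ∧
    (LinearMap.ker g)ᗮ = LinearMap.range f ∧
    (LinearMap.ker g ⊔ (LinearMap.ker g)ᗮ = ⊤ ∧
      LinearMap.range g ⊔ (LinearMap.range g)ᗮ = ⊤) ∧
    ((∀ w, g (f (g w)) = g w) ∧
      (∀ v, f (g (f v)) = f v) ∧
      (∀ w w' : W, (inner 𝕜 (f (g w)) w' : 𝕜) = inner 𝕜 w (f (g w'))) ∧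
      (∀ v v' : V, (inner 𝕜 (g (f v)) v' : 𝕜) = inner 𝕜 v (g (f v')))) := by
  set P : V →ₗ[𝕜] V := g ∘ₗ f with hP
  set Q : W →ₗ[𝕜] W := f ∘ₗ g with hQ
  have hPid : ∀ v, P (P v) = P v := by intro v; simp [hP, h₁]
  have hQid : ∀ w, Q (Q w) = Q w := by intro w; simp [hQ, h₂]
  have hPsym : ∀ v v' : V, (inner 𝕜 (P v) v' : 𝕜) = inner 𝕜 v (P v') := h₃
  have hQsym : ∀ w w' : W, (inner 𝕜 (Q w) w' : 𝕜) = inner 𝕜 w (Q w') := h₄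
  obtain ⟨hPr, hPk, hPsup⟩ := aux_proj 𝕜 V P hPid hPsym
  obtain ⟨hQr, hQk, hQsup⟩ := aux_proj 𝕜 W Q hQid hQsym
  have hkerP : LinearMap.ker P = LinearMap.ker f := by
    ext v
    simp only [LinearMap.mem_ker, hP, LinearMap.comp_apply]
    constructor
    · intro h; rw [← h₁ v, h, map_zero]
    · intro h; rw [h, map_zero]
  have hrangeP : LinearMap.range P = LinearMap.range g := by
    apply le_antisymm
    · rintro _ ⟨x, rfl⟩; exact ⟨f x, rfl⟩
    · rintro _ ⟨w, rfl⟩; exact ⟨g w, h₂ w⟩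
  have hkerQ : LinearMap.ker Q = LinearMap.ker g := by
    ext w
    simp only [LinearMap.mem_ker, hQ, LinearMap.comp_apply]
    constructor
    · intro h; rw [← h₂ w, h, map_zero]
    · intro h; rw [h, map_zero]
  have hrangeQ : LinearMap.range Q = LinearMap.range f := by
    apply le_antisymm
    · rintro _ ⟨x, rfl⟩; exact ⟨g x, rfl⟩
    · rintro _ ⟨v, rfl⟩; exact ⟨f v, h₁ v⟩
  refine ⟨?_, ?_, ?_, ?_, ⟨?_, ?_⟩, h₂, h₁, h₄, h₃⟩
  · rw [← hrangeP, ← hkerP]; exact hPr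
  · rw [← hkerQ, ← hrangeQ, ← hQk]
  · rw [← hrangeP, hPk, hkerP]
  · rw [← hkerQ, ← hQr]; exact hrangeQ
  · rw [← hkerQ, ← hQr]; exact hQsup
  · rw [← hrangeP, hPk, sup_comm]; exact hPsup
end

section
/- Let (E, ⟪·,·⟫) be a finite-dimensional inner product space over k, f : E → E a linear map, and H₁, …, H_n subspaces of E, each invariant under f (f(H_i) ⊆ H_i), such that E is the internal direct sum of H₁, …, H_n and H_i ⊆ (⨆_{j≠i} H_j)^⊥ for every i. Let g : E → E be a linear map with g(H_i) ⊆ H_i for every i whose restriction to each H_i is the Moore-Penrose inverse of the restriction f_i of f to H_i (i.e. for every i and all x, y ∈ H_i: f(g(f(x))) = f(x), g(f(g(x))) = g(x), ⟪g(f(x)), y⟫ = ⟪x, g(f(y))⟫ and ⟪f(g(x)), y⟫ = ⟪x, f(g(y))⟫). Then g is the Moore-Penrose inverse of f, i.e. f ∘ g ∘ f = f, g ∘ f ∘ g = g, and ⟪g(f(v)), v'⟫ = ⟪v, g(f(v'))⟫ and ⟪f(g(v)), v'⟫ = ⟪v, f(g(v'))⟫ for all v, v' ∈ E. -/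
/-- Let `E` be a finite-dimensional inner product space,
`f : E → E` linear, and `H₁, …, Hₙ` `f`-invariant subspaces with
`E = H₁ ⊕ ⋯ ⊕ Hₙ` and `Hᵢ ⊆ (⨆_{j≠i} Hⱼ)ᗮ` for every `i`.  If `g : E → E`
preserves each `Hᵢ` and restricts on each `Hᵢ` to the Moore-Penrose inverse of
the restriction of `f`, then `g` is the Moore-Penrose inverse of `f`. -/
theorem stmt13 (𝕜 : Type*) [RCLike 𝕜] (E : Type*) [NormedAddCommGroup E]
    [InnerProductSpace 𝕜 E] [FiniteDimensional 𝕜 E]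
    (f : E →ₗ[𝕜] E) (n : ℕ) (H : Fin n → Submodule 𝕜 E)
    (hinv : ∀ i, (H i).map f ≤ H i)
    (hHind : iSupIndep H) (hHsup : ⨆ i, H i = ⊤)
    (hperp : ∀ i, H i ≤ (⨆ j ∈ {j | j ≠ i}, H j)ᗮ)
    (g : E →ₗ[𝕜] E) (hginv : ∀ i, (H i).map g ≤ H i)
    (hg₁ : ∀ i, ∀ x ∈ H i, f (g (f x)) = f x)
    (hg₂ : ∀ i, ∀ x ∈ H i, g (f (g x)) = g x)
    (hg₃ : ∀ i, ∀ x ∈ H i, ∀ y ∈ H i, (inner 𝕜 (g (f x)) y : 𝕜) = inner 𝕜 x (g (f y)))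
    (hg₄ : ∀ i, ∀ x ∈ H i, ∀ y ∈ H i, (inner 𝕜 (f (g x)) y : 𝕜) = inner 𝕜 x (f (g y))) :
    (∀ v, f (g (f v)) = f v) ∧
    (∀ v, g (f (g v)) = g v) ∧
    (∀ v v' : E, (inner 𝕜 (g (f v)) v' : 𝕜) = inner 𝕜 v (g (f v'))) ∧
    (∀ v v' : E, (inner 𝕜 (f (g v)) v' : 𝕜) = inner 𝕜 v (f (g v'))) := by
  -- membership facts
  have hf : ∀ i, ∀ x ∈ H i, f x ∈ H i := fun i x hx =>
    hinv i (Submodule.mem_map_of_mem hx)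
  have hg : ∀ i, ∀ x ∈ H i, g x ∈ H i := fun i x hx =>
    hginv i (Submodule.mem_map_of_mem hx)
  -- orthogonality between distinct blocks
  have orth : ∀ i j, i ≠ j → ∀ x ∈ H i, ∀ y ∈ H j, (inner 𝕜 x y : 𝕜) = 0 := by
    intro i j hij x hx y hy
    have hy' : y ∈ ⨆ k ∈ {k | k ≠ i}, H k :=
      Submodule.mem_iSup_of_mem j (Submodule.mem_iSup_of_mem (Ne.symm hij) hy)
    have := (Submodule.mem_orthogonal _ x).mp (hperp i hx) y hy'
    simpa [inner_eq_zero_symm] using this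
  -- induction principle
  have key : ∀ (P : E → Prop), (∀ i, ∀ x ∈ H i, P x) → P 0 →
      (∀ x y, P x → P y → P (x + y)) → ∀ v, P v := by
    intro P hmem h0 hadd v
    have hv : v ∈ ⨆ i, H i := hHsup ▸ Submodule.mem_top
    exact Submodule.iSup_induction (motive := P) H hv hmem h0 hadd
  refine ⟨?_, ?_, ?_, ?_⟩
  · exact key _ hg₁ (by simp) (fun x y hx hy => by simp [map_add, hx, hy])
  · exact key _ hg₂ (by simp) (fun x y hx hy => by simp [map_add, hx, hy])
  · refine key (fun v => ∀ v', (inner 𝕜 (g (f v)) v' : 𝕜) = inner 𝕜 v (g (f v')))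
      ?_ (by simp) (fun x y hx hy v' => by
        simp [map_add, inner_add_left, hx v', hy v'])
    intro i x hx
    refine key (fun v' => (inner 𝕜 (g (f x)) v' : 𝕜) = inner 𝕜 x (g (f v')))
      ?_ (by simp) (fun a b ha hb => by simp [map_add, inner_add_right, ha, hb])
    intro j y hy
    rcases eq_or_ne i j with rfl | hij
    · exact hg₃ i x hx y hy
    · rw [orth i j hij _ (hg i _ (hf i _ hx)) y hy,
        orth i j hij x hx _ (hg j _ (hf j _ hy))]
  · refine key (fun v => ∀ v', (inner 𝕜 (f (g v)) v' : 𝕜) = inner 𝕜 v (f (g v')))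
      ?_ (by simp) (fun x y hx hy v' => by
        simp [map_add, inner_add_left, hx v', hy v'])
    intro i x hx
    refine key (fun v' => (inner 𝕜 (f (g x)) v' : 𝕜) = inner 𝕜 x (f (g v')))
      ?_ (by simp) (fun a b ha hb => by simp [map_add, inner_add_right, ha, hb])
    intro j y hy
    rcases eq_or_ne i j with rfl | hij
    · exact hg₄ i x hx y hy
    · rw [orth i j hij _ (hf i _ (hg i _ hx)) y hy,
        orth i j hij x hx _ (hf j _ (hg j _ hy))]
end

section
/- Assume f : V → V is admissible for the Moore-Penrose inverse, each H_i is finite-dimensional, and g : V → V is a linear map with g(H_i) ⊆ H_i for every i ∈ I whose restriction to each H_i is the Moore-Penrose inverse of the restriction f_i of f to H_i (i.e. for every i and all x, y ∈ H_i: f(g(f(x))) = f(x), g(f(g(x))) = g(x), ⟪g(f(x)), y⟫ = ⟪x, g(f(y))⟫ and ⟪f(g(x)), y⟫ = ⟪x, f(g(y))⟫). Then g is the Moore-Penrose inverse of f (i.e. f ∘ g ∘ f = f, g ∘ f ∘ g = g, and g ∘ f and f ∘ g are self-adjoint with respect to ⟪·,·⟫) if and only if the following two conditions hold: (1) H_i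 ∩ (f(H_i))^⊥ ⊆ (⨆_{j≠i} f(H_j))^⊥ for every i ∈ I, and (2) H_i ∩ (Ker f ∩ H_i)^⊥ ⊆ (⨆_{j≠i} (Ker f ∩ H_j))^⊥ for every i ∈ I. -/
/-- Let `V = ⊕ᵢ Hᵢ` with each `Hᵢ` finite-dimensional and
`f`-invariant, let `f` be admissible for the Moore-Penrose inverse, and let
`g` preserve each `Hᵢ` and restrict on each `Hᵢ` to the Moore-Penrose inverse
of the restriction of `f`.  Then `g` is the Moore-Penrose inverse of `f` iff
(1) `Hᵢ ⊓ (f(Hᵢ))ᗮ ⊆ (⨆_{j≠i} f(Hⱼ))ᗮ` for all `i`, and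
(2) `Hᵢ ⊓ (Ker f ∩ Hᵢ)ᗮ ⊆ (⨆_{j≠i} (Ker f ∩ Hⱼ))ᗮ` for all `i`. -/
theorem stmt14 (𝕜 : Type*) [RCLike 𝕜] (V : Type*) [NormedAddCommGroup V]
    [InnerProductSpace 𝕜 V] (f : V →ₗ[𝕜] V) (I : Type*) (H : I → Submodule 𝕜 V)
    (hinv : ∀ i, (H i).map f ≤ H i)
    (hHind : iSupIndep H) (hHsup : ⨆ i, H i = ⊤)
    (hfin : ∀ i, FiniteDimensional 𝕜 (H i))
    (hker : LinearMap.ker f ⊔ (LinearMap.ker f)ᗮ = ⊤)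
    (him : LinearMap.range f ⊔ (LinearMap.range f)ᗮ = ⊤)
    (g : V →ₗ[𝕜] V) (hginv : ∀ i, (H i).map g ≤ H i)
    (hg₁ : ∀ i, ∀ x ∈ H i, f (g (f x)) = f x)
    (hg₂ : ∀ i, ∀ x ∈ H i, g (f (g x)) = g x)
    (hg₃ : ∀ i, ∀ x ∈ H i, ∀ y ∈ H i, (inner 𝕜 (g (f x)) y : 𝕜) = inner 𝕜 x (g (f y)))
    (hg₄ : ∀ i, ∀ x ∈ H i, ∀ y ∈ H i, (inner 𝕜 (f (g x)) y : 𝕜) = inner 𝕜 x (f (g y))) :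
    ((∀ v, f (g (f v)) = f v) ∧
     (∀ v, g (f (g v)) = g v) ∧
     (∀ v v' : V, (inner 𝕜 (g (f v)) v' : 𝕜) = inner 𝕜 v (g (f v'))) ∧
     (∀ v v' : V, (inner 𝕜 (f (g v)) v' : 𝕜) = inner 𝕜 v (f (g v')))) ↔
    ((∀ i, H i ⊓ ((H i).map f)ᗮ ≤ (⨆ j ∈ {j | j ≠ i}, (H j).map f)ᗮ) ∧
     (∀ i, H i ⊓ (LinearMap.ker f ⊓ H i)ᗮ ≤
        (⨆ j ∈ {j | j ≠ i}, LinearMap.ker f ⊓ H j)ᗮ)) := by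
  have hmem : ∀ v : V, v ∈ ⨆ i, H i := fun v => hHsup.symm ▸ Submodule.mem_top
  have hfH : ∀ i, ∀ x ∈ H i, f x ∈ H i := fun i x hx => hinv i ⟨x, hx, rfl⟩
  have hgH : ∀ i, ∀ x ∈ H i, g x ∈ H i := fun i x hx => hginv i ⟨x, hx, rfl⟩
  -- fgf = f globally
  have A : ∀ v, f (g (f v)) = f v := by
    intro v
    refine Submodule.iSup_induction (motive := fun w => f (g (f w)) = f w) H (hmem v)
      (fun i x hx => hg₁ i x hx) (by simp) ?_
    intro x y hx hy
    simp only [map_add, hx, hy]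
  -- gfg = g globally
  have B : ∀ v, g (f (g v)) = g v := by
    intro v
    refine Submodule.iSup_induction (motive := fun w => g (f (g w)) = g w) H (hmem v)
      (fun i x hx => hg₂ i x hx) (by simp) ?_
    intro x y hx hy
    simp only [map_add, hx, hy]
  constructor
  · rintro ⟨h1, h2, h3, h4⟩
    constructor
    · -- condition (1) from global self-adjointness of f∘g
      intro i x hx
      obtain ⟨hxH, hxO⟩ := hx
      have hfgx : f (g x) = 0 := by
        have h0 : (inner 𝕜 (f (g x)) (f (g x)) : 𝕜) = inner 𝕜 x (f (g (f (g x)))) :=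
          hg₄ i x hxH (f (g x)) (hfH i (g x) (hgH i x hxH))
        rw [B x] at h0
        have hz : (inner 𝕜 x (f (g x)) : 𝕜) = 0 := by
          rw [inner_eq_zero_symm]
          exact hxO (f (g x)) ⟨g x, hgH i x hxH, rfl⟩
        exact inner_self_eq_zero.mp (h0.trans hz)
      rw [Submodule.mem_orthogonal]
      intro u hu
      refine Submodule.iSup_induction (motive := fun u => (inner 𝕜 u x : 𝕜) = 0) _ hu
        (fun j u hu => ?_) (by simp) (fun a b ha hb => by simp only [inner_add_left, ha, hb, add_zero])
      by_cases hj : j ∈ {j | j ≠ i}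
      · rw [iSup_pos hj] at hu
        obtain ⟨y, hy, rfl⟩ := hu
        calc (inner 𝕜 (f y) x : 𝕜) = inner 𝕜 (f (g (f y))) x := by rw [A y]
          _ = inner 𝕜 (f y) (f (g x)) := h4 (f y) x
          _ = 0 := by rw [hfgx, inner_zero_right]
      · rw [iSup_neg hj] at hu
        simp only [Submodule.mem_bot] at hu
        simp [hu]
    · -- condition (2) from global self-adjointness of g∘f
      intro i x hx
      obtain ⟨hxH, hxO⟩ := hx
      have hsub : x - g (f x) ∈ LinearMap.ker f ⊓ H i := by
        refine Submodule.mem_inf.mpr ⟨?_, Submodule.sub_mem _ hxH (hgH i (f x) (hfH i x hxH))⟩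
        rw [LinearMap.mem_ker, map_sub, A x, sub_self]
      have hgfx : g (f x) = x := by
        have e1 : (inner 𝕜 (x - g (f x)) x : 𝕜) = 0 := hxO _ hsub
        have e2 : (inner 𝕜 (g (f x)) (x - g (f x)) : 𝕜) = 0 := by
          have := hg₃ i x hxH (x - g (f x))
            (Submodule.sub_mem _ hxH (hgH i (f x) (hfH i x hxH)))
          rw [this, map_sub, map_sub, B (f x), sub_self, inner_zero_right]
        have e3 : (inner 𝕜 (x - g (f x)) (x - g (f x)) : 𝕜) = 0 := by
          rw [inner_sub_left, e2, sub_zero]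
          rw [inner_eq_zero_symm]
          exact e1
        have := inner_self_eq_zero.mp e3
        rw [sub_eq_zero] at this
        exact this.symm
      rw [Submodule.mem_orthogonal]
      intro u hu
      refine Submodule.iSup_induction (motive := fun u => (inner 𝕜 u x : 𝕜) = 0) _ hu
        (fun j u hu => ?_) (by simp) (fun a b ha hb => by simp only [inner_add_left, ha, hb, add_zero])
      by_cases hj : j ∈ {j | j ≠ i}
      · rw [iSup_pos hj] at hu
        obtain ⟨hu1, hu2⟩ := hu
        have : (inner 𝕜 (g (f u)) x : 𝕜) = inner 𝕜 u (g (f x)) := h3 u x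
        rw [LinearMap.mem_ker.mp hu1, map_zero, inner_zero_left, hgfx] at this
        exact this.symm
      · rw [iSup_neg hj] at hu
        simp only [Submodule.mem_bot] at hu
        simp [hu]
  · rintro ⟨c1, c2⟩
    refine ⟨A, B, ?_, ?_⟩
    · -- g∘f self-adjoint from condition (2)
      have key : ∀ i, ∀ x ∈ H i, x - g (f x) ∈ LinearMap.ker f ⊓ H i := by
        intro i x hx
        refine Submodule.mem_inf.mpr ⟨?_, Submodule.sub_mem _ hx (hgH i (f x) (hfH i x hx))⟩
        rw [LinearMap.mem_ker, map_sub, A x, sub_self]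
      have key' : ∀ i, ∀ x ∈ H i, g (f x) ∈ H i ⊓ (LinearMap.ker f ⊓ H i)ᗮ := by
        intro i x hx
        refine Submodule.mem_inf.mpr ⟨hgH i (f x) (hfH i x hx), ?_⟩
        rw [Submodule.mem_orthogonal]
        rintro u ⟨hu1, hu2⟩
        have := hg₃ i u hu2 x hx
        rw [LinearMap.mem_ker.mp hu1, map_zero, inner_zero_left] at this
        exact this.symm
      have pw : ∀ i j, ∀ x ∈ H i, ∀ y ∈ H j,
          (inner 𝕜 (g (f x)) y : 𝕜) = inner 𝕜 x (g (f y)) := by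
        intro i j x hx y hy
        by_cases hij : i = j
        · subst hij; exact hg₃ i x hx y hy
        · have hxO := c2 i (key' i x hx)
          have hyO := c2 j (key' j y hy)
          have hy' : y - g (f y) ∈ ⨆ k ∈ {k | k ≠ i}, LinearMap.ker f ⊓ H k :=
            (le_iSup₂ (f := fun k (_ : k ∈ {k | k ≠ i}) => LinearMap.ker f ⊓ H k) j
              (fun h => hij h.symm)) (key j y hy)
          have hx' : x - g (f x) ∈ ⨆ k ∈ {k | k ≠ j}, LinearMap.ker f ⊓ H k :=
            (le_iSup₂ (f := fun k (_ : k ∈ {k | k ≠ j}) => LinearMap.ker f ⊓ H k) i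
              hij) (key i x hx)
          have e1 : (inner 𝕜 (g (f x)) (y - g (f y)) : 𝕜) = 0 :=
            Submodule.inner_left_of_mem_orthogonal hy' hxO
          have e2 : (inner 𝕜 (x - g (f x)) (g (f y)) : 𝕜) = 0 :=
            Submodule.inner_right_of_mem_orthogonal hx' hyO
          have d1 : (inner 𝕜 (g (f x)) y : 𝕜) = inner 𝕜 (g (f x)) (g (f y)) := by
            rw [inner_sub_right] at e1
            exact sub_eq_zero.mp e1
          have d2 : (inner 𝕜 x (g (f y)) : 𝕜) = inner 𝕜 (g (f x)) (g (f y)) := by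
            rw [inner_sub_left] at e2
            exact sub_eq_zero.mp e2
          exact d1.trans d2.symm
      intro v v'
      refine Submodule.iSup_induction
        (motive := fun w => ∀ w', (inner 𝕜 (g (f w)) w' : 𝕜) = inner 𝕜 w (g (f w'))) H (hmem v)
        ?_ (by simp) ?_ v'
      · intro i x hx w'
        refine Submodule.iSup_induction
          (motive := fun w' => (inner 𝕜 (g (f x)) w' : 𝕜) = inner 𝕜 x (g (f w'))) H (hmem w')
          (fun j y hy => pw i j x hx y hy) (by simp) ?_
        intro a b ha hb
        rw [map_add, map_add, inner_add_right, inner_add_right, ha, hb]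
      · intro a b ha hb w'
        rw [map_add, map_add, inner_add_left, inner_add_left, ha w', hb w']
    · -- f∘g self-adjoint from condition (1)
      have key : ∀ i, ∀ x ∈ H i, x - f (g x) ∈ H i ⊓ ((H i).map f)ᗮ := by
        intro i x hx
        refine Submodule.mem_inf.mpr ⟨Submodule.sub_mem _ hx (hfH i (g x) (hgH i x hx)), ?_⟩
        rw [Submodule.mem_orthogonal]
        rintro u ⟨w, hw, rfl⟩
        have h0 := hg₄ i (f w) (hfH i w hw) (x - f (g x))
          (Submodule.sub_mem _ hx (hfH i (g x) (hgH i x hx)))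
        rw [A w] at h0
        rw [h0, map_sub, map_sub, B x, sub_self, inner_zero_right]
      have key' : ∀ i, ∀ x ∈ H i, f (g x) ∈ (H i).map f :=
        fun i x hx => ⟨g x, hgH i x hx, rfl⟩
      have pw : ∀ i j, ∀ x ∈ H i, ∀ y ∈ H j,
          (inner 𝕜 (f (g x)) y : 𝕜) = inner 𝕜 x (f (g y)) := by
        intro i j x hx y hy
        by_cases hij : i = j
        · subst hij; exact hg₄ i x hx y hy
        · have hxO := c1 i (key i x hx)
          have hyO := c1 j (key j y hy)
          have hy' : f (g x) ∈ ⨆ k ∈ {k | k ≠ j}, (H k).map f :=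
            (le_iSup₂ (f := fun k (_ : k ∈ {k | k ≠ j}) => (H k).map f) i hij)
              (key' i x hx)
          have hx' : f (g y) ∈ ⨆ k ∈ {k | k ≠ i}, (H k).map f :=
            (le_iSup₂ (f := fun k (_ : k ∈ {k | k ≠ i}) => (H k).map f) j
              (fun h => hij h.symm)) (key' j y hy)
          have e1 : (inner 𝕜 (f (g x)) (y - f (g y)) : 𝕜) = 0 := by
            rw [inner_eq_zero_symm]
            exact Submodule.inner_left_of_mem_orthogonal hy' hyO
          have e2 : (inner 𝕜 (x - f (g x)) (f (g y)) : 𝕜) = 0 :=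
            Submodule.inner_left_of_mem_orthogonal hx' hxO
          have d1 : (inner 𝕜 (f (g x)) y : 𝕜) = inner 𝕜 (f (g x)) (f (g y)) := by
            rw [inner_sub_right] at e1
            exact sub_eq_zero.mp e1
          have d2 : (inner 𝕜 x (f (g y)) : 𝕜) = inner 𝕜 (f (g x)) (f (g y)) := by
            rw [inner_sub_left] at e2
            exact sub_eq_zero.mp e2
          exact d1.trans d2.symm
      intro v v'
      refine Submodule.iSup_induction
        (motive := fun w => ∀ w', (inner 𝕜 (f (g w)) w' : 𝕜) = inner 𝕜 w (f (g w'))) H (hmem v)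
        ?_ (by simp) ?_ v'
      · intro i x hx w'
        refine Submodule.iSup_induction
          (motive := fun w' => (inner 𝕜 (f (g x)) w' : 𝕜) = inner 𝕜 x (f (g w'))) H (hmem w')
          (fun j y hy => pw i j x hx y hy) (by simp) ?_
        intro a b ha hb
        rw [map_add, map_add, inner_add_right, inner_add_right, ha, hb]
      · intro a b ha hb w'
        rw [map_add, map_add, inner_add_left, inner_add_left, ha w', hb w']
end

section
/- Assume each H_i is finite-dimensional, H_i ⊆ (⨆_{j≠i} H_j)^⊥ for every i ∈ I, and g : V → V is a linear map with g(H_i) ⊆ H_i for every i ∈ I whose restriction to each H_i is the Moore-Penrose inverse of the restriction f_i of f to H_i (i.e. for every i and all x, y ∈ H_i: f(g(f(x))) = f(x), g(f(g(x))) = g(x), ⟪g(f(x)), y⟫ = ⟪x, g(f(y))⟫ and ⟪f(g(x)), y⟫ = ⟪x, f(g(y))⟫). Then f is admissible for the Moore-Penrose inverse (Ker f ⊔ (Ker f)^⊥ = V and Im f ⊔ (Im f)^⊥ = V) and g is the Moore-Penrose inverse of f. -/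
/-- Let `V = ⊕ᵢ Hᵢ` with each `Hᵢ` finite-dimensional,
`f`-invariant and `Hᵢ ⊆ (⨆_{j≠i} Hⱼ)ᗮ`, and let `g` preserve each `Hᵢ` and
restrict on each `Hᵢ` to the Moore-Penrose inverse of the restriction of `f`.
Then `f` is admissible for the Moore-Penrose inverse and `g` is the
Moore-Penrose inverse of `f`. -/
theorem stmt15 (𝕜 : Type*) [RCLike 𝕜] (V : Type*) [NormedAddCommGroup V]
    [InnerProductSpace 𝕜 V] (f : V →ₗ[𝕜] V) (I : Type*) (H : I → Submodule 𝕜 V)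
    (hinv : ∀ i, (H i).map f ≤ H i)
    (hHind : iSupIndep H) (hHsup : ⨆ i, H i = ⊤)
    (hfin : ∀ i, FiniteDimensional 𝕜 (H i))
    (hperp : ∀ i, H i ≤ (⨆ j ∈ {j | j ≠ i}, H j)ᗮ)
    (g : V →ₗ[𝕜] V) (hginv : ∀ i, (H i).map g ≤ H i)
    (hg₁ : ∀ i, ∀ x ∈ H i, f (g (f x)) = f x)
    (hg₂ : ∀ i, ∀ x ∈ H i, g (f (g x)) = g x)
    (hg₃ : ∀ i, ∀ x ∈ H i, ∀ y ∈ H i, (inner 𝕜 (g (f x)) y : 𝕜) = inner 𝕜 x (g (f y)))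
    (hg₄ : ∀ i, ∀ x ∈ H i, ∀ y ∈ H i, (inner 𝕜 (f (g x)) y : 𝕜) = inner 𝕜 x (f (g y))) :
    (LinearMap.ker f ⊔ (LinearMap.ker f)ᗮ = ⊤ ∧
      LinearMap.range f ⊔ (LinearMap.range f)ᗮ = ⊤) ∧
    (∀ v, f (g (f v)) = f v) ∧
    (∀ v, g (f (g v)) = g v) ∧
    (∀ v v' : V, (inner 𝕜 (g (f v)) v' : 𝕜) = inner 𝕜 v (g (f v'))) ∧
    (∀ v v' : V, (inner 𝕜 (f (g v)) v' : 𝕜) = inner 𝕜 v (f (g v'))) := by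
  -- every vector lies in any submodule containing all the `H i`
  have key : ∀ (T : Submodule 𝕜 V), (∀ i, H i ≤ T) → ∀ v, v ∈ T := by
    intro T hT v
    have h : (⊤ : Submodule 𝕜 V) ≤ T := hHsup ▸ iSup_le hT
    exact h trivial
  -- orthogonality of distinct pieces
  have horth : ∀ i j, j ≠ i → ∀ x ∈ H i, ∀ y ∈ H j, (inner 𝕜 x y : 𝕜) = 0 := by
    intro i j hne x hx y hy
    have hy' : y ∈ ⨆ j' ∈ {j' | j' ≠ i}, H j' :=
      Submodule.mem_iSup_of_mem j (Submodule.mem_iSup_of_mem hne hy)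
    have := (Submodule.mem_orthogonal _ _).mp (hperp i hx) y hy'
    exact inner_eq_zero_symm.mpr this
  -- invariance facts
  have hfmem : ∀ i, ∀ x ∈ H i, f x ∈ H i := fun i x hx =>
    hinv i (Submodule.mem_map_of_mem hx)
  have hgmem : ∀ i, ∀ x ∈ H i, g x ∈ H i := fun i x hx =>
    hginv i (Submodule.mem_map_of_mem hx)
  have hpmem : ∀ i, ∀ x ∈ H i, g (f x) ∈ H i := fun i x hx =>
    hgmem i _ (hfmem i x hx)
  have hqmem : ∀ i, ∀ x ∈ H i, f (g x) ∈ H i := fun i x hx =>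
    hfmem i _ (hgmem i x hx)
  -- global equation fgf = f
  have hfgf : ∀ v, f (g (f v)) = f v := by
    intro v
    have hv : v ∈ LinearMap.ker (f ∘ₗ g ∘ₗ f - f) := by
      refine key _ (fun i x hx => ?_) v
      simp [LinearMap.mem_ker, LinearMap.sub_apply, hg₁ i x hx]
    simpa [LinearMap.mem_ker, sub_eq_zero] using hv
  -- global equation gfg = g
  have hgfg : ∀ v, g (f (g v)) = g v := by
    intro v
    have hv : v ∈ LinearMap.ker (g ∘ₗ f ∘ₗ g - g) := by
      refine key _ (fun i x hx => ?_) v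
      simp [LinearMap.mem_ker, LinearMap.sub_apply, hg₂ i x hx]
    simpa [LinearMap.mem_ker, sub_eq_zero] using hv
  -- symmetry, abstract helper
  have sym : ∀ p : V →ₗ[𝕜] V, (∀ i, ∀ x ∈ H i, p x ∈ H i) →
      (∀ i, ∀ x ∈ H i, ∀ y ∈ H i, (inner 𝕜 (p x) y : 𝕜) = inner 𝕜 x (p y)) →
      ∀ v v', (inner 𝕜 (p v) v' : 𝕜) = inner 𝕜 v (p v') := by
    intro p hpm hps v v'
    set D : V →ₗ⋆[𝕜] V →ₗ[𝕜] 𝕜 := (innerₛₗ 𝕜).comp p - (innerₛₗ 𝕜).compl₂ p with hD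
    have hD0 : ∀ i, ∀ x ∈ H i, ∀ j, ∀ y ∈ H j, D x y = 0 := by
      intro i x hx j y hy
      have hDxy : D x y = inner 𝕜 (p x) y - inner 𝕜 x (p y) := rfl
      rw [hDxy, sub_eq_zero]
      by_cases hji : j = i
      · subst hji; exact hps j x hx y hy
      · rw [horth i j hji (p x) (hpm i x hx) y hy, horth i j hji x hx (p y) (hpm j y hy)]
    have hDv : D v = 0 := by
      refine LinearMap.mem_ker.mp (key (LinearMap.ker D) (fun i x hx => ?_) v)
      rw [LinearMap.mem_ker]
      apply LinearMap.ext
      intro y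
      exact LinearMap.mem_ker.mp
        (key (LinearMap.ker (D x)) (fun j z hz => hD0 i x hx j z hz) y)
    have : D v v' = 0 := by rw [hDv]; rfl
    have h' : (inner 𝕜 (p v) v' : 𝕜) - inner 𝕜 v (p v') = 0 := this
    exact sub_eq_zero.mp h'
  have hgf_sym : ∀ v v', (inner 𝕜 (g (f v)) v' : 𝕜) = inner 𝕜 v (g (f v')) :=
    sym (g ∘ₗ f) hpmem hg₃
  have hfg_sym : ∀ v v', (inner 𝕜 (f (g v)) v' : 𝕜) = inner 𝕜 v (f (g v')) :=
    sym (f ∘ₗ g) hqmem hg₄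
  refine ⟨⟨?_, ?_⟩, hfgf, hgfg, hgf_sym, hfg_sym⟩
  · rw [eq_top_iff]
    intro v _
    have h1 : v - g (f v) ∈ LinearMap.ker f := by
      simp [LinearMap.mem_ker, map_sub, hfgf v]
    have h2 : g (f v) ∈ (LinearMap.ker f)ᗮ := by
      rw [Submodule.mem_orthogonal]
      intro u hu
      have h3 := hgf_sym u v
      rw [← h3, LinearMap.mem_ker.mp hu, map_zero, inner_zero_left]
    have hv : v = (v - g (f v)) + g (f v) := by abel
    exact hv ▸ Submodule.add_mem_sup h1 h2
  · rw [eq_top_iff]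
    intro v _
    have h1 : f (g v) ∈ LinearMap.range f := ⟨g v, rfl⟩
    have h2 : v - f (g v) ∈ (LinearMap.range f)ᗮ := by
      rw [Submodule.mem_orthogonal]
      intro u hu
      obtain ⟨w, rfl⟩ := hu
      have h3 : (inner 𝕜 (f w) (f (g v)) : 𝕜) = inner 𝕜 (f w) v := by
        have h4 := hfg_sym (f w) v
        rw [← h4, hfgf w]
      rw [inner_sub_right, h3, sub_self]
    have hv : v = f (g v) + (v - f (g v)) := by abel
    exact hv ▸ Submodule.add_mem_sup h1 h2
end

section
/- Let f : V → W be a linear map admissible for the Moore-Penrose inverse, g : W → V its Moore-Penrose inverse, and w ∈ W. Then g(w) is a least-norm solution of the linear system f(x) = w: for every v ∈ V, ‖f(g(w)) − w‖ ≤ ‖f(v) − w‖, where ‖·‖ is the norm induced by the inner product on W. -/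
/-- If `f : V → W` is admissible for the Moore-Penrose inverse and
`g` is its Moore-Penrose inverse, then for every `w`, `g w` is a least-norm
solution of `f x = w`: `‖f (g w) - w‖ ≤ ‖f v - w‖` for every `v`. -/
theorem stmt16 (𝕜 : Type*) [RCLike 𝕜] (V W : Type*) [NormedAddCommGroup V]
    [InnerProductSpace 𝕜 V] [NormedAddCommGroup W] [InnerProductSpace 𝕜 W]
    (f : V →ₗ[𝕜] W)
    (hker : LinearMap.ker f ⊔ (LinearMap.ker f)ᗮ = ⊤)
    (him : LinearMap.range f ⊔ (LinearMap.range f)ᗮ = ⊤)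
    (g : W →ₗ[𝕜] V)
    (h₁ : ∀ v, f (g (f v)) = f v) (h₂ : ∀ w, g (f (g w)) = g w)
    (h₃ : ∀ v v' : V, (inner 𝕜 (g (f v)) v' : 𝕜) = inner 𝕜 v (g (f v')))
    (h₄ : ∀ w w' : W, (inner 𝕜 (f (g w)) w' : 𝕜) = inner 𝕜 w (f (g w')))
    (w : W) :
    ∀ v : V, ‖f (g w) - w‖ ≤ ‖f v - w‖ := by
  intro v
  have horth : ∀ u : V, (inner 𝕜 (f u) (f (g w) - w) : 𝕜) = 0 := by
    intro u
    have h0 : (inner 𝕜 (f (g w) - w) (f u) : 𝕜) = 0 := by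
      rw [inner_sub_left, h₄ w (f u), h₁ u, sub_self]
    rw [← inner_conj_symm, h0, map_zero]
  have key : ‖f v - w‖ * ‖f v - w‖ =
      ‖f v - f (g w)‖ * ‖f v - f (g w)‖ + ‖f (g w) - w‖ * ‖f (g w) - w‖ := by
    have h := norm_add_sq_eq_norm_sq_add_norm_sq_of_inner_eq_zero
      (𝕜 := 𝕜) (f v - f (g w)) (f (g w) - w) ?_
    · rwa [sub_add_sub_cancel] at h
    · rw [show f v - f (g w) = f (v - g w) from (map_sub f v (g w)).symm]
      exact horth _
  nlinarith [norm_nonneg (f v - f (g w)), norm_nonneg (f (g w) - w), norm_nonneg (f v - w)]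
end

section
/- Let f : V → W be a linear map admissible for the Moore-Penrose inverse, g : W → V its Moore-Penrose inverse, and w ∈ W. Then v' ∈ V is a least-norm solution of the linear system f(x) = w (i.e. ‖f(v') − w‖ ≤ ‖f(v) − w‖ for all v ∈ V) if and only if f(v') = f(g(w)). -/
/-- If `f : V → W` is admissible for the Moore-Penrose inverse and
`g` is its Moore-Penrose inverse, then `v'` is a least-norm solution of
`f x = w` iff `f v' = f (g w)`. -/
theorem stmt17 (𝕜 : Type*) [RCLike 𝕜] (V W : Type*) [NormedAddCommGroup V]
    [InnerProductSpace 𝕜 V] [NormedAddCommGroup W] [InnerProductSpace 𝕜 W]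
    (f : V →ₗ[𝕜] W)
    (hker : LinearMap.ker f ⊔ (LinearMap.ker f)ᗮ = ⊤)
    (him : LinearMap.range f ⊔ (LinearMap.range f)ᗮ = ⊤)
    (g : W →ₗ[𝕜] V)
    (h₁ : ∀ v, f (g (f v)) = f v) (h₂ : ∀ w, g (f (g w)) = g w)
    (h₃ : ∀ v v' : V, (inner 𝕜 (g (f v)) v' : 𝕜) = inner 𝕜 v (g (f v')))
    (h₄ : ∀ w w' : W, (inner 𝕜 (f (g w)) w' : 𝕜) = inner 𝕜 w (f (g w')))
    (w : W) (v' : V) :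
    (∀ v : V, ‖f v' - w‖ ≤ ‖f v - w‖) ↔ f v' = f (g w) := by
  have key : ∀ u : V, (inner 𝕜 (f u) (f (g w) - w) : 𝕜) = 0 := by
    intro u
    have h5 : (inner 𝕜 (f (g w)) (f u) : 𝕜) = inner 𝕜 w (f u) := by
      rw [h₄ w (f u), h₁]
    rw [inner_sub_right, ← inner_conj_symm, h5, inner_conj_symm, sub_self]
  have pyth : ∀ v : V, ‖f v - w‖ ^ 2 = ‖f v - f (g w)‖ ^ 2 + ‖f (g w) - w‖ ^ 2 := by
    intro v
    have hdecomp : f v - w = (f v - f (g w)) + (f (g w) - w) := by abel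
    have hi : (inner 𝕜 (f v - f (g w)) (f (g w) - w) : 𝕜) = 0 := by
      rw [← map_sub]; exact key (v - g w)
    rw [hdecomp, @norm_add_sq 𝕜, hi]
    simp [pow_two]
  constructor
  · intro h
    have hle := h (g w)
    have h2 := pyth v'
    have hsq : ‖f v' - w‖ ^ 2 ≤ ‖f (g w) - w‖ ^ 2 :=
      pow_le_pow_left₀ (norm_nonneg _) hle 2
    have : ‖f v' - f (g w)‖ ^ 2 ≤ 0 := by linarith
    have : ‖f v' - f (g w)‖ = 0 :=
      le_antisymm (by nlinarith [norm_nonneg (f v' - f (g w))]) (norm_nonneg _)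
    exact sub_eq_zero.mp (norm_eq_zero.mp this)
  · intro h v
    have h2 := pyth v
    have h3 := pyth v'
    rw [h] at h3
    have : ‖f v' - w‖ ^ 2 ≤ ‖f v - w‖ ^ 2 := by
      rw [h, h2]; nlinarith [sq_nonneg ‖f v - f (g w)‖]
    exact (pow_le_pow_iff_left₀ (norm_nonneg _) (norm_nonneg _) two_ne_zero).mp this
end

section
/- Let f : V → W be a linear map admissible for the Moore-Penrose inverse, g : W → V its Moore-Penrose inverse, and w ∈ W. Then g(w) is the unique minimal least-norm solution of the linear system f(x) = w: if v' ∈ V satisfies ‖f(v') − w‖ ≤ ‖f(v) − w‖ for all v ∈ V and v' ≠ g(w), then ‖g(w)‖ < ‖v'‖. -/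
/-- If `f : V → W` is admissible for the Moore-Penrose inverse and
`g` is its Moore-Penrose inverse, then `g w` is the unique minimal least-norm
solution of `f x = w`: any other least-norm solution has strictly larger norm. -/
theorem stmt18 (𝕜 : Type*) [RCLike 𝕜] (V W : Type*) [NormedAddCommGroup V]
    [InnerProductSpace 𝕜 V] [NormedAddCommGroup W] [InnerProductSpace 𝕜 W]
    (f : V →ₗ[𝕜] W)
    (hker : LinearMap.ker f ⊔ (LinearMap.ker f)ᗮ = ⊤)
    (him : LinearMap.range f ⊔ (LinearMap.range f)ᗮ = ⊤)
    (g : W →ₗ[𝕜] V)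
    (h₁ : ∀ v, f (g (f v)) = f v) (h₂ : ∀ w, g (f (g w)) = g w)
    (h₃ : ∀ v v' : V, (inner 𝕜 (g (f v)) v' : 𝕜) = inner 𝕜 v (g (f v')))
    (h₄ : ∀ w w' : W, (inner 𝕜 (f (g w)) w' : 𝕜) = inner 𝕜 w (f (g w')))
    (w : W) (v' : V)
    (hleast : ∀ v : V, ‖f v' - w‖ ≤ ‖f v - w‖) (hne : v' ≠ g w) :
    ‖g w‖ < ‖v'‖ := by
  -- `w - f (g w)` is orthogonal to the range of `f`
  have key : ∀ u : V, (inner 𝕜 (f u) (f (g w) - w) : 𝕜) = 0 := by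
    intro u
    have h := h₄ w (f u)
    rw [h₁] at h
    have h' : (inner 𝕜 (f u) (f (g w)) : 𝕜) = inner 𝕜 (f u) w := by
      have hc := congrArg (starRingEnd 𝕜) h
      simpa [inner_conj_symm] using hc
    rw [inner_sub_right, h', sub_self]
  have pyth : ∀ v : V, ‖f v - w‖ ^ 2 = ‖f v - f (g w)‖ ^ 2 + ‖f (g w) - w‖ ^ 2 := by
    intro v
    have horth : (inner 𝕜 (f v - f (g w)) (f (g w) - w) : 𝕜) = 0 := by
      have := key (v - g w)
      simpa [map_sub] using this
    have h5 := norm_add_sq_eq_norm_sq_add_norm_sq_of_inner_eq_zero _ _ horth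
    calc ‖f v - w‖ ^ 2 = ‖(f v - f (g w)) + (f (g w) - w)‖ ^ 2 := by rw [sub_add_sub_cancel]
      _ = _ := by rw [pow_two, pow_two, pow_two]; exact h5
  have heq : f v' = f (g w) := by
    have h1 : ‖f v' - w‖ ≤ ‖f (g w) - w‖ := hleast (g w)
    have h2 := pyth v'
    have h3 : ‖f v' - f (g w)‖ ^ 2 ≤ 0 := by nlinarith [norm_nonneg (f v' - w), norm_nonneg (f (g w) - w)]
    have : ‖f v' - f (g w)‖ = 0 := by nlinarith [norm_nonneg (f v' - f (g w))]
    rwa [norm_eq_zero, sub_eq_zero] at this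
  have hgf : g (f v') = g w := by rw [heq, h₂]
  have horth : (inner 𝕜 (g w) (v' - g w) : 𝕜) = 0 := by
    have hz : g (f (v' - g w)) = 0 := by
      rw [map_sub, map_sub, hgf, h₂, sub_self]
    have h6 := h₃ v' (v' - g w)
    rw [hgf, hz, inner_zero_right] at h6
    exact h6
  have hnorm : ‖v'‖ ^ 2 = ‖g w‖ ^ 2 + ‖v' - g w‖ ^ 2 := by
    have h7 := norm_add_sq_eq_norm_sq_add_norm_sq_of_inner_eq_zero _ _ horth
    rw [add_sub_cancel] at h7
    rw [pow_two, pow_two, pow_two]; exact h7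
  have hpos : 0 < ‖v' - g w‖ := by
    rw [norm_pos_iff, sub_ne_zero]; exact hne
  nlinarith [norm_nonneg v', norm_nonneg (g w)]
end
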